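/- arXiv:2102.07667 — 2 statements merged into one kernel-verified Lean document; each statement's English description precedes it below -/
import Mathlib

section
/- Let P be the Petersen graph, let s and t be adjacent vertices of P, and let P' = P − {s,t}. For every neighbour l of s in P with l ≠ t and every neighbour r of t in P with r ≠ s, there exists a 2-colouring of V(P') such that: each colour class has exactly 4 vertices; every monochromatic component has at most 2 vertices; and among the four degree-2 vertices of P', exactly l and r receive colour 1. -/
/-!
The permutations of `Fin 5` act on the Petersen graph, and the hypotheses say exactly that
`l - s - t - r` is a 3-arc. This action is transitive on 3-arcs (checked exhaustively), and a
balanced colouring can be transported along automorphisms, so it suffices to colour the single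
configuration `s = {0,1}`, `t = {2,3}`, `l = {2,4}`, `r = {0,4}`: give colour `0` to `{2,4}` and
to the three vertices containing `0`. The only monochromatic edges are then `{0,3}{2,4}` and
`{1,2}{3,4}`, so no vertex has two neighbours of its own colour, and monochromatic components
have at most two vertices.
-/

/-- Vertices of the Petersen graph: 2-element subsets of {1,...,5} (modelled as `Fin 5`). -/
abbrev PetersenVert : Type := {p : Finset (Fin 5) // p.card = 2}

/-- The Petersen graph as the Kneser graph K(5,2): two 2-subsets are adjacent iff disjoint. -/
def Petersen : SimpleGraph PetersenVert where
  Adj a b := Disjoint a.1 b.1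
  symm := ⟨fun _ _ h => Disjoint.symm h⟩
  loopless := ⟨by
    intro a h
    have ha : a.1 = ∅ := by simpa using disjoint_self.mp h
    have := a.2
    rw [ha] at this
    simp at this⟩

/-- The vertex set of `P' = P − {s, t}`. -/
def avoidSet (s t : PetersenVert) : Set PetersenVert := {v | v ≠ s ∧ v ≠ t}

/-- `P' = P − {s, t}`: the subgraph of the Petersen graph induced on the vertices
different from `s` and `t`. -/
def Pminus (s t : PetersenVert) : SimpleGraph (avoidSet s t) :=
  Petersen.induce (avoidSet s t)

/-- `v` is one of the (four) vertices of degree 2 of `P' = P − {s, t}`. -/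
def IsDeg2 (s t : PetersenVert) (v : avoidSet s t) : Prop :=
  ((Pminus s t).neighborSet v).ncard = 2


namespace SimpleGraph

variable {V W : Type*} {G : SimpleGraph V}

lemma Walk.eq_or_adj_of_subsingleton_neighborSet (h : ∀ v, (G.neighborSet v).Subsingleton)
    {u v : V} (p : G.Walk u v) : v = u ∨ G.Adj u v := by
  induction p with
  | nil => exact .inl rfl
  | cons hadj _ ih =>
    rcases ih with rfl | hadj'
    · exact .inr hadj
    · exact .inl (h _ hadj' hadj.symm)

lemma ConnectedComponent.ncard_supp_le_two (h : ∀ v, (G.neighborSet v).Subsingleton)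
    (K : G.ConnectedComponent) : K.supp.ncard ≤ 2 := by
  obtain ⟨v, rfl⟩ := K.exists_rep
  have hsupp : (G.connectedComponentMk v).supp ⊆ insert v (G.neighborSet v) := fun w hw => by
    obtain ⟨p⟩ := ConnectedComponent.exact ((ConnectedComponent.mem_supp_iff _ _).1 hw).symm
    exact p.eq_or_adj_of_subsingleton_neighborSet h
  calc (G.connectedComponentMk v).supp.ncard
      ≤ (insert v (G.neighborSet v)).ncard := Set.ncard_le_ncard hsupp ((h v).finite.insert v)
    _ ≤ (G.neighborSet v).ncard + 1 := Set.ncard_insert_le _ _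
    _ ≤ 2 := by
      have := (Set.ncard_le_one (h v).finite).2 fun a ha b hb => h v ha hb
      omega

/-- The conditions of `balanced_colouring_exists` on a 2-colouring `c` of `G`, with the bound on
monochromatic components replaced by the stronger local condition `eq_of_adj_of_adj`; `R` is the
set of degree-2 vertices that must get colour `0`. -/
structure IsBalancedColouring (G : SimpleGraph V) (c : V → Fin 2) (R : Set V) : Prop where
  ncard_zero : {v | c v = 0}.ncard = 4
  ncard_one : {v | c v = 1}.ncard = 4
  eq_of_adj_of_adj : ∀ ⦃u v w⦄, c u = c v → c u = c w → G.Adj u v → G.Adj u w → v = w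
  eq_zero_iff : ∀ v, (G.neighborSet v).ncard = 2 → (c v = 0 ↔ v ∈ R)

namespace IsBalancedColouring

variable {G' : SimpleGraph W} {c : V → Fin 2} {R : Set V}

lemma map (h : G.IsBalancedColouring c R) (e : G ≃g G') :
    G'.IsBalancedColouring (c ∘ e.symm) (e.symm ⁻¹' R) where
  ncard_zero := by
    rw [← h.ncard_zero]
    exact Set.ncard_preimage_of_injective_subset_range (s := {v | c v = 0})
      e.symm.injective (by simp)
  ncard_one := by
    rw [← h.ncard_one]
    exact Set.ncard_preimage_of_injective_subset_range (s := {v | c v = 1})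
      e.symm.injective (by simp)
  eq_of_adj_of_adj u v w huv huw hv hw :=
    e.symm.injective <|
      h.eq_of_adj_of_adj huv huw (e.symm.map_adj_iff.2 hv) (e.symm.map_adj_iff.2 hw)
  eq_zero_iff v hv := h.eq_zero_iff (e.symm v) <| by
    rwa [← e.symm.image_neighborSet, Set.ncard_image_of_injective _ e.symm.injective]

lemma ncard_supp_le_two (h : G.IsBalancedColouring c R) (i : Fin 2)
    (K : (G.induce {v | c v = i}).ConnectedComponent) : K.supp.ncard ≤ 2 := by
  refine K.ncard_supp_le_two fun u v hv w hw => ?_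
  exact Subtype.ext (h.eq_of_adj_of_adj (u.2.trans v.2.symm) (u.2.trans w.2.symm) hv hw)

end IsBalancedColouring

end SimpleGraph

namespace Petersen

instance : DecidableRel Petersen.Adj := fun a b => inferInstanceAs (Decidable (Disjoint a.1 b.1))

instance (s t : PetersenVert) : DecidablePred (· ∈ avoidSet s t) := fun v =>
  inferInstanceAs (Decidable (v ≠ s ∧ v ≠ t))

instance (s t : PetersenVert) : DecidableRel (Pminus s t).Adj := fun a b =>
  inferInstanceAs (Decidable (Disjoint a.1.1 b.1.1))

def isoOfPerm (σ : Equiv.Perm (Fin 5)) : Petersen ≃g Petersen where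
  toEquiv := σ.finsetCongr.subtypeEquiv fun s => by simp
  map_rel_iff' := Finset.disjoint_map _

lemma bijOn_avoidSet (φ : Petersen ≃g Petersen) (s t : PetersenVert) :
    Set.BijOn φ (avoidSet s t) (avoidSet (φ s) (φ t)) :=
  φ.toEquiv.bijOn fun v => by simp [avoidSet]

def pminusIso (φ : Petersen ≃g Petersen) (s t : PetersenVert) :
    Pminus s t ≃g Pminus (φ s) (φ t) :=
  φ.induce (bijOn_avoidSet φ s t)

@[simp]
lemma coe_pminusIso_symm_apply (φ : Petersen ≃g Petersen) (s t : PetersenVert)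
    (v : avoidSet (φ s) (φ t)) : ((pminusIso φ s t).symm v : PetersenVert) = φ.symm v :=
  rfl

def s₀ : PetersenVert := ⟨{0, 1}, rfl⟩
def t₀ : PetersenVert := ⟨{2, 3}, rfl⟩
def l₀ : PetersenVert := ⟨{2, 4}, rfl⟩
def r₀ : PetersenVert := ⟨{0, 4}, rfl⟩

set_option synthInstance.maxSize 1024 in
set_option maxRecDepth 4000 in
theorem exists_isoOfPerm_eq (s t l r : PetersenVert) (hst : Petersen.Adj s t)
    (hsl : Petersen.Adj s l) (hlt : l ≠ t) (htr : Petersen.Adj t r) (hrs : r ≠ s) :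
    ∃ σ, isoOfPerm σ s₀ = s ∧ isoOfPerm σ t₀ = t ∧ isoOfPerm σ l₀ = l ∧ isoOfPerm σ r₀ = r := by
  revert s t l r
  decide

def baseColouring (v : avoidSet s₀ t₀) : Fin 2 := if 0 ∈ v.1.1 ∨ v.1 = l₀ then 0 else 1

theorem isBalancedColouring_baseColouring :
    (Pminus s₀ t₀).IsBalancedColouring baseColouring {v | v.1 = l₀ ∨ v.1 = r₀} where
  ncard_zero := by rw [Set.ncard_eq_toFinset_card']; decide
  ncard_one := by rw [Set.ncard_eq_toFinset_card']; decide
  eq_of_adj_of_adj := by decide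
  eq_zero_iff := by simp_rw [Set.ncard_eq_toFinset_card']; decide

end Petersen

/-- Let `s, t` be adjacent vertices of the Petersen graph and `P' = P − {s,t}`.  For every
neighbour `l` of `s` with `l ≠ t` and every neighbour `r` of `t` with `r ≠ s`, there is a
2-colouring of `V(P')` (colour 1 is the value `0 : Fin 2`, colour 2 the value `1`) such
that each colour class has exactly 4 vertices, every monochromatic component has at most
2 vertices, and among the four degree-2 vertices of `P'` exactly `l` and `r` get colour 1. -/
theorem balanced_colouring_exists (s t : PetersenVert) (hst : Petersen.Adj s t)
    (l r : PetersenVert) (hsl : Petersen.Adj s l) (hlt : l ≠ t)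
    (htr : Petersen.Adj t r) (hrs : r ≠ s) :
    ∃ c : avoidSet s t → Fin 2,
      {v : avoidSet s t | c v = 0}.ncard = 4 ∧
      {v : avoidSet s t | c v = 1}.ncard = 4 ∧
      (∀ i : Fin 2,
        ∀ K : ((Pminus s t).induce {v | c v = i}).ConnectedComponent, K.supp.ncard ≤ 2) ∧
      (∀ v : avoidSet s t, IsDeg2 s t v →
        (c v = 0 ↔ ((v : PetersenVert) = l ∨ (v : PetersenVert) = r))) := by
  obtain ⟨σ, rfl, rfl, rfl, rfl⟩ := Petersen.exists_isoOfPerm_eq s t l r hst hsl hlt htr hrs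
  have h := Petersen.isBalancedColouring_baseColouring.map
    (Petersen.pminusIso (Petersen.isoOfPerm σ) Petersen.s₀ Petersen.t₀)
  refine ⟨_, h.ncard_zero, h.ncard_one, h.ncard_supp_le_two, fun v hv => ?_⟩
  rw [h.eq_zero_iff v hv]
  simp only [Set.mem_preimage, Set.mem_ofPred_eq, Petersen.coe_pminusIso_symm_apply,
    RelIso.symm_apply_eq]
end

section
/- Let P be the Petersen graph, let s and t be adjacent vertices of P, and let P' = P − {s,t}. For every 2-colouring of V(P') in which every monochromatic component has at most 2 vertices, the cardinalities of the two colour classes differ by at most 2; in particular, no such 2-colouring has colour classes of sizes 6 and 2 or 7 and 1 or 8 and 0. -/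
/-
For adjacent `s`, `t` the graph `P − {s, t}` is an 8-cycle with two chords. A colour class all of
whose monochromatic components have at most two vertices never contains three consecutive vertices
of that Hamiltonian cycle, so counting it over the eight windows of three consecutive vertices
gives `3 |S| ≤ 2 · 8`, i.e. `|S| ≤ 5`; the two classes partition eight vertices, hence differ by
at most 2.
Since `Sym(5)` acts edge-transitively on the Petersen graph, one cycle for one edge suffices.
-/

open Function

namespace SimpleGraph

variable {V : Type*} {G : SimpleGraph V}

theorem eq_of_adj_of_adj_of_forall_ncard_supp_le_two [Finite V] {s : Set V}
    (hs : ∀ K : (G.induce s).ConnectedComponent, K.supp.ncard ≤ 2)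
    {v u w : V} (hv : v ∈ s) (hu : u ∈ s) (hw : w ∈ s) (hvu : G.Adj v u) (hvw : G.Adj v w) :
    u = w := by
  by_contra huw
  let K := (G.induce s).connectedComponentMk ⟨v, hv⟩
  have hsub : ({⟨v, hv⟩, ⟨u, hu⟩, ⟨w, hw⟩} : Set s) ⊆ K.supp := by
    rintro x (rfl | rfl | rfl)
    · rfl
    · have hadj : (G.induce s).Adj ⟨v, hv⟩ ⟨u, hu⟩ := hvu
      exact (ConnectedComponent.sound hadj.reachable).symm
    · have hadj : (G.induce s).Adj ⟨v, hv⟩ ⟨w, hw⟩ := hvw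
      exact (ConnectedComponent.sound hadj.reachable).symm
  have hcard : ({⟨v, hv⟩, ⟨u, hu⟩, ⟨w, hw⟩} : Set s).ncard = 3 := by
    rw [Set.ncard_eq_three]
    exact ⟨_, _, _, Subtype.coe_ne_coe.1 hvu.ne, Subtype.coe_ne_coe.1 hvw.ne,
      Subtype.coe_ne_coe.1 huw, rfl⟩
  have := Set.ncard_le_ncard hsub
  have := hs K
  omega

theorem three_mul_ncard_le_of_hamiltonian_cycle {n : ℕ} [NeZero n] (hn : 2 < n) (f : Fin n ≃ V)
    (hf : ∀ k, G.Adj (f k) (f (k + 1))) {s : Set V}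
    (hs : ∀ v ∈ s, ∀ u ∈ s, ∀ w ∈ s, G.Adj v u → G.Adj v w → u = w) :
    3 * s.ncard ≤ 2 * n := by
  classical
  let g : Fin n → ℕ := fun k => if f k ∈ s then 1 else 0
  have hsum : ∑ k, g k = s.ncard := by
    have := Fintype.ofEquiv _ f
    rw [Equiv.sum_comp f (fun v => if v ∈ s then 1 else 0), Finset.sum_boole,
      Set.ncard_eq_toFinset_card']
    simp
  have hshift (j : Fin n) : ∑ k, g (k + j) = ∑ k, g k := Equiv.sum_comp (Equiv.addRight j) g
  have hwindow (k : Fin n) : g k + g (k + 1) + g (k + (1 + 1)) ≤ 2 := by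
    have hg (j : Fin n) : g j ≤ 1 := by unfold g; split_ifs <;> omega
    have hmem (j : Fin n) (hj : g j ≠ 0) : f j ∈ s := by by_contra h; simp [g, h] at hj
    by_contra! h
    have h2 : f k = f (k + (1 + 1)) := hs _ (hmem (k + 1) (by grind)) _ (hmem k (by grind)) _
      (hmem _ (by grind)) (hf k).symm (by simpa [add_assoc] using hf (k + 1))
    have h3 : (1 + 1 : Fin n) ≠ 0 := by simp [Fin.ext_iff, Fin.val_add, Nat.mod_eq_of_lt, hn]
    exact h3 (by simpa using f.injective h2)
  calc 3 * s.ncard = ∑ k, (g k + g (k + 1) + g (k + (1 + 1))) := by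
        rw [Finset.sum_add_distrib, Finset.sum_add_distrib, hshift, hshift, hsum]; ring
    _ ≤ ∑ _k : Fin n, 2 := Finset.sum_le_sum fun k _ => hwindow k
    _ = 2 * n := by simp [mul_comm]

end SimpleGraph

def petersenIsoOfPerm (σ : Equiv.Perm (Fin 5)) : Petersen ≃g Petersen where
  toFun p := ⟨p.1.map σ.toEmbedding, by simp [p.2]⟩
  invFun p := ⟨p.1.map σ.symm.toEmbedding, by simp [p.2]⟩
  left_inv p := by ext; simp
  right_inv p := by ext; simp
  map_rel_iff' := Finset.disjoint_map _

instance : DecidableRel Petersen.Adj := fun a b =>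
  inferInstanceAs (Decidable (Disjoint a.1 b.1))

set_option maxRecDepth 10000 in
theorem exists_petersenIsoOfPerm_of_adj : ∀ s t : PetersenVert, Petersen.Adj s t →
    ∃ σ : Equiv.Perm (Fin 5),
      petersenIsoOfPerm σ ⟨{0, 1}, rfl⟩ = s ∧
      petersenIsoOfPerm σ ⟨{2, 3}, rfl⟩ = t := by
  decide

def petersenCycle : Fin 8 → PetersenVert :=
  ![⟨{0, 2}, rfl⟩, ⟨{1, 4}, rfl⟩, ⟨{0, 3}, rfl⟩, ⟨{2, 4}, rfl⟩,
    ⟨{1, 3}, rfl⟩, ⟨{0, 4}, rfl⟩, ⟨{1, 2}, rfl⟩, ⟨{3, 4}, rfl⟩]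

theorem petersenCycle_injective : Injective petersenCycle := by decide

theorem petersenCycle_adj : ∀ k, Petersen.Adj (petersenCycle k) (petersenCycle (k + 1)) := by
  decide

theorem range_petersenCycle :
    Set.range petersenCycle = avoidSet ⟨{0, 1}, rfl⟩ ⟨{2, 3}, rfl⟩ := by
  ext v
  simp only [Set.mem_range, avoidSet, Set.mem_ofPred_eq]
  revert v
  decide

theorem image_avoidSet (e : PetersenVert ≃ PetersenVert) (s t : PetersenVert) :
    e '' avoidSet s t = avoidSet (e s) (e t) := by
  ext v
  simp [avoidSet, Equiv.image_eq_preimage_symm, Equiv.symm_apply_eq]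

theorem exists_hamiltonian_cycle_pminus {s t : PetersenVert} (hst : Petersen.Adj s t) :
    ∃ f : Fin 8 ≃ avoidSet s t, ∀ k, (Pminus s t).Adj (f k) (f (k + 1)) := by
  obtain ⟨σ, rfl, rfl⟩ := exists_petersenIsoOfPerm_of_adj s t hst
  let φ := petersenIsoOfPerm σ
  have hinj : Injective (φ ∘ petersenCycle) := φ.injective.comp petersenCycle_injective
  have hrange :
      Set.range (φ ∘ petersenCycle) = avoidSet (φ ⟨{0, 1}, rfl⟩) (φ ⟨{2, 3}, rfl⟩) := by
    rw [Set.range_comp, range_petersenCycle]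
    exact image_avoidSet φ.toEquiv _ _
  refine ⟨(Equiv.ofInjective _ hinj).trans (Equiv.setCongr hrange), fun k => ?_⟩
  exact φ.map_adj_iff.2 (petersenCycle_adj k)

/-- For adjacent vertices `s, t` of the Petersen graph and `P' = P − {s,t}`: in every
2-colouring of `V(P')` all of whose monochromatic components have at most 2 vertices, the
cardinalities of the two colour classes differ by at most 2; in particular (as `P'` has 8
vertices) no such colouring has colour classes of sizes 6 and 2, 7 and 1, or 8 and 0,
i.e. every colour class has at most 5 vertices. -/
theorem colour_classes_differ_by_at_most_two (s t : PetersenVert) (hst : Petersen.Adj s t)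
    (c : avoidSet s t → Fin 2)
    (hmono : ∀ i : Fin 2,
      ∀ K : ((Pminus s t).induce {v | c v = i}).ConnectedComponent, K.supp.ncard ≤ 2) :
    |({v : avoidSet s t | c v = 0}.ncard : ℤ) - ({v : avoidSet s t | c v = 1}.ncard : ℤ)|
        ≤ 2 ∧
    ∀ i : Fin 2, {v : avoidSet s t | c v = i}.ncard ≤ 5 := by
  obtain ⟨f, hf⟩ := exists_hamiltonian_cycle_pminus hst
  have hclass (i : Fin 2) : {v : avoidSet s t | c v = i}.ncard ≤ 5 := by
    have := SimpleGraph.three_mul_ncard_le_of_hamiltonian_cycle (by norm_num) f hf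
      fun v hv u hu w hw =>
        SimpleGraph.eq_of_adj_of_adj_of_forall_ncard_supp_le_two (hmono i) hv hu hw
    omega
  have htotal : {v : avoidSet s t | c v = 0}.ncard + {v : avoidSet s t | c v = 1}.ncard = 8 := by
    have hcompl : {v : avoidSet s t | c v = 1} = {v | c v = 0}ᶜ := by
      ext v
      simp only [Set.mem_ofPred_eq, Set.mem_compl_iff]
      omega
    rw [hcompl, Set.ncard_add_ncard_compl, Nat.card_congr f.symm, Nat.card_eq_fintype_card,
      Fintype.card_fin]
  have h0 := hclass 0
  have h1 := hclass 1
  exact ⟨abs_le.2 ⟨by omega, by omega⟩, hclass⟩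
end
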